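/- Let (X_i, Y_i), i = 1, ..., n+1, be exchangeable random pairs, let s : X × Y → ℝ be a fixed measurable nonconformity score, set R_i = s(X_i, Y_i), and let q̂ be the ⌈(n+1)(1−α)⌉-th smallest value among R_1, ..., R_n (assuming ⌈(n+1)(1−α)⌉ ≤ n). Then P(s(X_{n+1}, Y_{n+1}) ≤ q̂) ≥ 1 − α, i.e., the conformal prediction set C(X_{n+1}) = {y : s(X_{n+1}, y) ≤ q̂} contains Y_{n+1} with probability at least 1 − α. -/

import Mathlib

open MeasureTheory

/-- The `k`-th smallest value among `x 0, ..., x (n-1)` (for `1 ≤ k ≤ n`). -/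
noncomputable def orderStat {n : ℕ} (x : Fin n → ℝ) (k : ℕ) : ℝ :=
  sInf {t : ℝ | k ≤ (Finset.univ.filter (fun i => x i ≤ t)).card}

/-!
With `k = ⌈(n+1)(1-α)⌉`, the test score is at most `q̂` exactly when fewer than `k` of all
`n + 1` scores lie strictly below it. In every outcome at least `k` of the `n + 1` scores have this
property, and by exchangeability each of them has it with the same probability, which is
therefore at least `k / (n + 1) ≥ 1 - α`.
-/

open Finset ENNReal

theorem le_orderStat_iff {n k : ℕ} (hk₁ : 1 ≤ k) (hkn : k ≤ n) (x : Fin n → ℝ) (t : ℝ) :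
    t ≤ orderStat x k ↔ #{i | x i < t} < k := by
  have : Nonempty (Fin n) := ⟨⟨0, by omega⟩⟩
  have hne : {u : ℝ | k ≤ #{i | x i ≤ u}}.Nonempty := by
    refine ⟨univ.sup' univ_nonempty x, ?_⟩
    rwa [Set.mem_ofPred_eq, filter_true_of_mem fun i _ => le_sup' x (mem_univ i), card_univ,
      Fintype.card_fin]
  have hbdd : BddBelow {u : ℝ | k ≤ #{i | x i ≤ u}} := by
    refine ⟨univ.inf' univ_nonempty x, fun u hu => ?_⟩
    obtain ⟨i, hi⟩ := card_pos.mp (hk₁.trans hu)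
    exact (inf'_le x (mem_univ i)).trans (mem_filter.mp hi).2
  rw [orderStat, le_csInf_iff hbdd hne]
  constructor
  · intro h
    by_contra! hc
    obtain ⟨i₀, hi₀, hmax⟩ := exists_max_image {i | x i < t} x (card_pos.mp (hk₁.trans hc))
    have hsub := monotone_filter_right univ fun i _ (hi : x i < t) =>
      hmax i (mem_filter.mpr ⟨mem_univ i, hi⟩)
    exact (mem_filter.mp hi₀).2.not_ge (h _ (hc.trans (card_le_card hsub)))
  · intro hc u hu
    by_contra! hut
    have hsub := monotone_filter_right univ fun i _ (hi : x i ≤ u) => hi.trans_lt hut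
    exact (hu.trans (card_le_card hsub)).not_gt hc

section StrictRank

variable {ι α : Type*} [Fintype ι] [LinearOrder α]

def strictRank (r : ι → α) (j : ι) : ℕ := #{i | r i < r j}

theorem strictRank_comp_perm (r : ι → α) (σ : Equiv.Perm ι) (j : ι) :
    strictRank (r ∘ σ) j = strictRank r (σ j) := by
  simp only [strictRank, card_filter, Function.comp_apply]
  exact Equiv.sum_comp σ fun i => if r i < r (σ j) then 1 else 0

/-- An entry of least value among those of strict rank `≥ k` has only entries of strict rank `< k`
below it, so there are at least `k` of the latter. -/
theorem le_card_filter_strictRank_lt (r : ι → α) {k : ℕ} (hk : k ≤ Fintype.card ι) :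
    k ≤ #{j | strictRank r j < k} := by
  by_contra! hS
  have hT : ({j | ¬ strictRank r j < k} : Finset ι).Nonempty := by
    rw [← card_pos]
    have := card_filter_add_card_filter_not (s := univ) fun j => strictRank r j < k
    rw [card_univ] at this
    omega
  obtain ⟨j, hj, hmin⟩ := exists_min_image _ r hT
  have hsub := monotone_filter_right univ fun i _ (hi : r i < r j) => by
    by_contra hi'
    exact (hmin i (mem_filter.mpr ⟨mem_univ i, hi'⟩)).not_gt hi
  exact (mem_filter.mp hj).2 ((card_le_card hsub).trans_lt hS)

end StrictRank

section Exchangeable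

variable {Ω ι β γ : Type*} [MeasurableSpace Ω] [MeasurableSpace β] [MeasurableSpace γ]

def IsExchangeable (μ : Measure Ω) (Z : Ω → ι → β) : Prop :=
  ∀ σ : Equiv.Perm ι, μ.map (fun ω i => Z ω (σ i)) = μ.map Z

variable {μ : Measure Ω} {Z : Ω → ι → β}

theorem IsExchangeable.comp (hZ : IsExchangeable μ Z) (hZm : Measurable Z) {g : β → γ}
    (hg : Measurable g) : IsExchangeable μ fun ω i => g (Z ω i) := by
  intro σ
  have hG : Measurable fun (v : ι → β) i => g (v i) :=
    measurable_pi_lambda _ fun i => hg.comp (measurable_pi_apply i)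
  have hZσ : Measurable fun ω i => Z ω (σ i) :=
    measurable_pi_lambda _ fun i => (measurable_pi_apply (σ i)).comp hZm
  calc μ.map (fun ω i => g (Z ω (σ i)))
      = (μ.map fun ω i => Z ω (σ i)).map fun v i => g (v i) := (Measure.map_map hG hZσ).symm
    _ = (μ.map Z).map fun v i => g (v i) := by rw [hZ σ]
    _ = μ.map fun ω i => g (Z ω i) := Measure.map_map hG hZm

theorem IsExchangeable.measure_preimage_comp_perm (hZ : IsExchangeable μ Z) (hZm : Measurable Z)
    (σ : Equiv.Perm ι) {A : Set (ι → β)} (hA : MeasurableSet A) :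
    μ {ω | Z ω ∘ σ ∈ A} = μ {ω | Z ω ∈ A} := by
  have hZσ : Measurable fun ω i => Z ω (σ i) :=
    measurable_pi_lambda _ fun i => (measurable_pi_apply (σ i)).comp hZm
  have h := congrArg (· A) (hZ σ)
  simp only [Measure.map_apply hZσ hA, Measure.map_apply hZm hA] at h
  exact h

end Exchangeable

section RankCoverage

variable {Ω ι α : Type*} [MeasurableSpace Ω] [Fintype ι]
  [LinearOrder α] [TopologicalSpace α] [OrderClosedTopology α] [SecondCountableTopology α]
  [MeasurableSpace α] [OpensMeasurableSpace α]

theorem measurable_strictRank (j : ι) : Measurable fun r : ι → α => strictRank r j := by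
  simp only [strictRank, card_filter]
  exact Finset.measurable_sum _ fun i _ =>
    Measurable.ite (measurableSet_lt (measurable_pi_apply i) (measurable_pi_apply j))
      measurable_const measurable_const

variable {μ : Measure Ω} {Z : Ω → ι → α}

theorem IsExchangeable.measure_strictRank_lt_eq (hZ : IsExchangeable μ Z) (hZm : Measurable Z)
    (k : ℕ) (j j' : ι) :
    μ {ω | strictRank (Z ω) j < k} = μ {ω | strictRank (Z ω) j' < k} := by
  classical
  have hA : MeasurableSet {r : ι → α | strictRank r j' < k} :=
    measurable_strictRank j' (measurableSet_Iio (a := k))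
  have h := hZ.measure_preimage_comp_perm hZm (Equiv.swap j j') hA
  simp only [Set.mem_ofPred_eq, strictRank_comp_perm, Equiv.swap_apply_right] at h
  exact h

theorem mul_measure_univ_le_sum_measure_strictRank_lt (hZm : Measurable Z) {k : ℕ}
    (hk : k ≤ Fintype.card ι) :
    k * μ Set.univ ≤ ∑ j, μ {ω | strictRank (Z ω) j < k} := by
  have hE : ∀ j, MeasurableSet {ω | strictRank (Z ω) j < k} := fun j =>
    (measurable_strictRank j).comp hZm (measurableSet_Iio (a := k))
  calc k * μ Set.univ = ∫⁻ _, (k : ℝ≥0∞) ∂μ := (lintegral_const _).symm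
    _ ≤ ∫⁻ ω, (#{j | strictRank (Z ω) j < k} : ℝ≥0∞) ∂μ :=
        lintegral_mono fun ω => Nat.cast_le.mpr (le_card_filter_strictRank_lt (Z ω) hk)
    _ = ∫⁻ ω, ∑ j, {ω | strictRank (Z ω) j < k}.indicator 1 ω ∂μ := by
        simp only [card_filter, Nat.cast_sum, Nat.cast_ite, Nat.cast_one, Nat.cast_zero,
          Set.indicator_apply, Set.mem_ofPred_eq, Pi.one_apply]
    _ = ∑ j, μ {ω | strictRank (Z ω) j < k} := by
        rw [lintegral_finsetSum _ fun j _ => measurable_one.indicator (hE j)]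
        exact Finset.sum_congr rfl fun j _ => lintegral_indicator_one (hE j)

theorem IsExchangeable.div_card_le_measure_strictRank_lt [IsProbabilityMeasure μ]
    (hZ : IsExchangeable μ Z) (hZm : Measurable Z) {k : ℕ} (hk : k ≤ Fintype.card ι) (j : ι) :
    (k : ℝ≥0∞) / Fintype.card ι ≤ μ {ω | strictRank (Z ω) j < k} := by
  apply ENNReal.div_le_of_le_mul
  have h := mul_measure_univ_le_sum_measure_strictRank_lt (μ := μ) hZm hk
  rwa [measure_univ, mul_one,
    Finset.sum_congr rfl fun j' _ => hZ.measure_strictRank_lt_eq hZm k j' j, sum_const, card_univ,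
    nsmul_eq_mul, mul_comm] at h

end RankCoverage

theorem le_orderStat_castSucc_iff {n k : ℕ} (hk₁ : 1 ≤ k) (hkn : k ≤ n) (r : Fin (n + 1) → ℝ) :
    r (Fin.last n) ≤ orderStat (fun i : Fin n => r i.castSucc) k ↔
      strictRank r (Fin.last n) < k := by
  rw [le_orderStat_iff hk₁ hkn, strictRank, card_filter, card_filter, Fin.sum_univ_castSucc,
    if_neg (lt_irrefl _), add_zero]

theorem ofReal_le_natCeil_mul_div {N : ℕ} (hN : N ≠ 0) (x : ℝ) :
    ENNReal.ofReal x ≤ ⌈(N : ℝ) * x⌉₊ / N := by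
  rw [ENNReal.le_div_iff_mul_le (Or.inl (Nat.cast_ne_zero.mpr hN)) (Or.inl (natCast_ne_top N)),
    ← ENNReal.ofReal_natCast N, ← ENNReal.ofReal_mul' N.cast_nonneg, ← ENNReal.ofReal_natCast,
    mul_comm]
  exact ENNReal.ofReal_le_ofReal (Nat.le_ceil _)

theorem split_conformal_coverage_general
    {Ω 𝒳 𝒴 : Type*} [MeasurableSpace Ω] [MeasurableSpace 𝒳] [MeasurableSpace 𝒴]
    (P : Measure Ω) [IsProbabilityMeasure P]
    (n : ℕ) (X : Fin (n + 1) → Ω → 𝒳) (Y : Fin (n + 1) → Ω → 𝒴)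
    (hX : ∀ i, Measurable (X i)) (hY : ∀ i, Measurable (Y i))
    (hexch : ∀ σ : Equiv.Perm (Fin (n + 1)),
      P.map (fun ω (i : Fin (n + 1)) => (X (σ i) ω, Y (σ i) ω)) =
        P.map (fun ω (i : Fin (n + 1)) => (X i ω, Y i ω)))
    (s : 𝒳 × 𝒴 → ℝ) (hs : Measurable s)
    (α : ℝ) (hα1 : α < 1)
    (hk : ⌈((n : ℝ) + 1) * (1 - α)⌉₊ ≤ n) :
    ENNReal.ofReal (1 - α) ≤
      P {ω | Y (Fin.last n) ω ∈
        {y : 𝒴 | s (X (Fin.last n) ω, y) ≤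
          orderStat (fun i : Fin n => s (X i.castSucc ω, Y i.castSucc ω))
            ⌈((n : ℝ) + 1) * (1 - α)⌉₊} } := by
  set k := ⌈((n : ℝ) + 1) * (1 - α)⌉₊
  have hk₁ : 1 ≤ k := Nat.ceil_pos.mpr (mul_pos n.cast_add_one_pos (sub_pos.mpr hα1))
  have hXY : Measurable fun ω i => (X i ω, Y i ω) :=
    measurable_pi_lambda _ fun i => (hX i).prodMk (hY i)
  have hR : Measurable fun ω i => s (X i ω, Y i ω) :=
    measurable_pi_lambda _ fun i => hs.comp ((hX i).prodMk (hY i))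
  have hexchXY : IsExchangeable P fun ω i => (X i ω, Y i ω) := hexch
  have hexchR : IsExchangeable P fun ω i => s (X i ω, Y i ω) := hexchXY.comp hXY hs
  calc ENNReal.ofReal (1 - α) ≤ k / ((n + 1 : ℕ) : ℝ≥0∞) := by
        simpa using ofReal_le_natCeil_mul_div n.succ_ne_zero (1 - α)
    _ ≤ P {ω | strictRank (fun i => s (X i ω, Y i ω)) (Fin.last n) < k} := by
        simpa using hexchR.div_card_le_measure_strictRank_lt hR (hk.trans (by simp)) (Fin.last n)
    _ = _ := by
        congr 1
        ext ω
        exact (le_orderStat_castSucc_iff hk₁ hk _).symm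

/-- Split conformal prediction coverage guarantee: with `q̂` the
`⌈(n+1)(1-α)⌉`-th smallest calibration score, the score of the test point is at
most `q̂` with probability at least `1 - α`; equivalently the conformal set
`C(X_{n+1}) = {y | s (X_{n+1}, y) ≤ q̂}` contains `Y_{n+1}` with probability at
least `1 - α`. -/
theorem split_conformal_coverage
    {Ω 𝒳 𝒴 : Type*} [MeasurableSpace Ω] [MeasurableSpace 𝒳] [MeasurableSpace 𝒴]
    (P : Measure Ω) [IsProbabilityMeasure P]
    (n : ℕ) (X : Fin (n + 1) → Ω → 𝒳) (Y : Fin (n + 1) → Ω → 𝒴)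
    (hX : ∀ i, Measurable (X i)) (hY : ∀ i, Measurable (Y i))
    (hexch : ∀ σ : Equiv.Perm (Fin (n + 1)),
      P.map (fun ω (i : Fin (n + 1)) => (X (σ i) ω, Y (σ i) ω)) =
        P.map (fun ω (i : Fin (n + 1)) => (X i ω, Y i ω)))
    (s : 𝒳 × 𝒴 → ℝ) (hs : Measurable s)
    (α : ℝ) (hα0 : 0 < α) (hα1 : α < 1)
    (hk : ⌈((n : ℝ) + 1) * (1 - α)⌉₊ ≤ n) :
    ENNReal.ofReal (1 - α) ≤
      P {ω | Y (Fin.last n) ω ∈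
        {y : 𝒴 | s (X (Fin.last n) ω, y) ≤
          orderStat (fun i : Fin n => s (X i.castSucc ω, Y i.castSucc ω))
            ⌈((n : ℝ) + 1) * (1 - α)⌉₊} } :=
  split_conformal_coverage_general P n X Y hX hY hexch s hs α hα1 hk
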